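/- arXiv:1108.6036 — 4 statements merged into one kernel-verified Lean document; each statement's English description precedes it below -/
import Mathlib

section
/- Every extreme point of the convex set of q-probability operators on H is a pure (rank-one) q-probability operator, i.e., has the form |ψ⟩⟨ψ| for some ψ ∈ H with |⟨1, ψ⟩| = 1. -/
local notation "⟪" x ", " y "⟫" => @inner ℂ _ _ x y

/-!
Put `ψ = ρ 1`. Cauchy–Schwarz for the positive semi-inner product `(x, y) ↦ ⟪ρ x, y⟫`, normalised
by `⟪ρ 1, 1⟫ = 1`, gives `|⟪ψ, x⟫|² ≤ ⟪ρ x, x⟫`, i.e. `|ψ⟩⟨ψ| ≤ ρ` in the Loewner order. Both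
`σ = |ψ⟩⟨ψ|` and `2ρ - σ = σ + 2(ρ - σ)` are q-probability operators (as `⟪(ρ - σ) 1, 1⟫ = 0`),
and `ρ` is their midpoint, so extremality forces `ρ = σ`.
-/

open RCLike InnerProductSpace
open scoped InnerProductSpace ComplexOrder

namespace ContinuousLinearMap

variable {𝕜 E : Type*} [RCLike 𝕜] [NormedAddCommGroup E] [InnerProductSpace 𝕜 E]

theorem IsPositive.inner_mul_inner_self_le {T : E →L[𝕜] E} (hT : T.IsPositive) (x y : E) :
    ‖⟪T x, y⟫_𝕜‖ * ‖⟪T y, x⟫_𝕜‖ ≤ re ⟪T x, x⟫_𝕜 * re ⟪T y, y⟫_𝕜 :=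
  InnerProductSpace.Core.inner_mul_inner_self_le (c :=
    { inner x y := ⟪T x, y⟫_𝕜
      conj_inner_symm x y := by rw [inner_conj_symm, hT.inner_left_eq_inner_right]
      re_inner_nonneg := hT.re_inner_nonneg_left
      add_left x y z := by rw [map_add, inner_add_left]
      smul_left x y r := by rw [map_smul, inner_smul_left] }) x y

theorem IsPositive.rankOne_le {T : E →L[𝕜] E} (hT : T.IsPositive) {e : E}
    (he : ⟪T e, e⟫_𝕜 = 1) : rankOne 𝕜 (T e) (T e) ≤ T := by
  refine ⟨hT.isSymmetric.sub (isPositive_rankOne_self (T e)).isSymmetric, fun x => ?_⟩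
  have hcs := hT.inner_mul_inner_self_le e x
  rw [he, one_re, one_mul, hT.inner_left_eq_inner_right x, norm_inner_symm x, ← sq] at hcs
  rw [reApplyInnerSelf_apply, sub_apply, inner_sub_left, map_sub, rankOne_apply, inner_smul_left,
    RCLike.conj_mul, ← ofReal_pow, ofReal_re]
  linarith

end ContinuousLinearMap

open ContinuousLinearMap

theorem eq_of_le_of_extreme {H : Type*} [NormedAddCommGroup H] [InnerProductSpace ℂ H]
    {e : H} {ρ σ : H →L[ℂ] H}
    (hext : ∀ (ρ₁ ρ₂ : H →L[ℂ] H), ρ₁.IsPositive → ρ₂.IsPositive →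
      ⟪ρ₁ e, e⟫ = 1 → ⟪ρ₂ e, e⟫ = 1 →
      ∀ l : ℝ, 0 < l → l < 1 → ρ = (l : ℂ) • ρ₁ + ((1 - l : ℝ) : ℂ) • ρ₂ → ρ₁ = ρ₂)
    (hρe : ⟪ρ e, e⟫ = 1) (hσ : σ.IsPositive) (hσe : ⟪σ e, e⟫ = 1) (hle : σ ≤ ρ) : ρ = σ := by
  have hδ : (ρ - σ).IsPositive := hle
  have hδe : ⟪(ρ - σ) e, e⟫ = 0 := by rw [sub_apply, inner_sub_left, hρe, hσe, sub_self]
  have hsplit : ρ = ((1 / 2 : ℝ) : ℂ) • (σ + (2 : ℂ) • (ρ - σ)) + ((1 - 1 / 2 : ℝ) : ℂ) • σ := by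
    push_cast
    module
  have hρ₁e : ⟪(σ + (2 : ℂ) • (ρ - σ)) e, e⟫ = 1 := by
    rw [add_apply, smul_apply, inner_add_left, inner_smul_left, hδe, hσe, mul_zero, add_zero]
  have h := hext _ σ (hσ.add (hδ.smul_of_nonneg (by norm_num))) hσ hρ₁e hσe (1 / 2)
    (by norm_num) (by norm_num) hsplit
  rw [add_eq_left, smul_eq_zero, sub_eq_zero] at h
  exact h.resolve_left two_ne_zero

theorem stmt5_general {H : Type*} [NormedAddCommGroup H] [InnerProductSpace ℂ H]
    (one : H)
    (ρ : H →L[ℂ] H) (hρ : ρ.IsPositive) (hn : ⟪ρ one, one⟫ = 1)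
    (hext : ∀ (ρ₁ ρ₂ : H →L[ℂ] H), ρ₁.IsPositive → ρ₂.IsPositive →
      ⟪ρ₁ one, one⟫ = 1 → ⟪ρ₂ one, one⟫ = 1 →
      ∀ l : ℝ, 0 < l → l < 1 → ρ = (l : ℂ) • ρ₁ + ((1 - l : ℝ) : ℂ) • ρ₂ → ρ₁ = ρ₂) :
    ∃ ψ : H, ‖⟪one, ψ⟫‖ = 1 ∧ ρ = (innerSL ℂ ψ).smulRight ψ := by
  refine ⟨ρ one, by rw [← inner_conj_symm, hn, map_one, norm_one], ?_⟩
  have hψe : ⟪rankOne ℂ (ρ one) (ρ one) one, one⟫ = 1 := by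
    rw [rankOne_apply, inner_smul_left, hn, map_one, one_mul]
  exact eq_of_le_of_extreme hext hn (isPositive_rankOne_self _) hψe (hρ.rankOne_le hn)

/-- Every extreme point of the convex set of q-probability operators is a pure
(rank-one) q-probability operator, i.e., of the form |ψ⟩⟨ψ| with |⟨1,ψ⟩| = 1. -/
theorem stmt5 {H : Type*} [NormedAddCommGroup H] [InnerProductSpace ℂ H] [CompleteSpace H]
    (one : H) (hone : ‖one‖ = 1)
    (ρ : H →L[ℂ] H) (hρ : ρ.IsPositive) (hn : ⟪ρ one, one⟫ = 1)
    (hext : ∀ (ρ₁ ρ₂ : H →L[ℂ] H), ρ₁.IsPositive → ρ₂.IsPositive →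
      ⟪ρ₁ one, one⟫ = 1 → ⟪ρ₂ one, one⟫ = 1 →
      ∀ l : ℝ, 0 < l → l < 1 → ρ = (l : ℂ) • ρ₁ + ((1 - l : ℝ) : ℂ) • ρ₂ → ρ₁ = ρ₂) :
    ∃ ψ : H, ‖⟪one, ψ⟫‖ = 1 ∧ ρ = (innerSL ℂ ψ).smulRight ψ :=
  stmt5_general one ρ hρ hn hext
end

section
/- If ρ is a bounded positive operator on H with ⟨ρ1,1⟩ = 1 and ρ is an extreme point of the set of q-probability operators, then the spectrum of ρ consists of a single point, i.e., ρ = αP for a projection P and α > 0. -/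
/-!
Let `ρ` be an extreme q-probability operator. If `0 ≤ T ≤ ρ` and `a = ⟨T1, 1⟩ ∈ [0, 1]`, then
`ρ = ½ (T + (1 - a) ρ) + ½ ((ρ - T) + a ρ)` writes `ρ` as the midpoint of two q-probability
operators, so extremality forces `T = a ρ`. Applying this to `T = f(ρ) ρ` for a continuous
`0 ≤ f ≤ 1` that is `1` at one nonzero spectral value and `0` at another shows that the spectrum
of `ρ` is `{0, α}` or `{α}` with `α > 0`; hence `α⁻¹ ρ` is a projection.
-/

local notation "⟪" x ", " y "⟫" => @inner ℂ _ _ x y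

section CStarAlgebra

variable {A : Type*} [CStarAlgebra A]

lemma isStarProjection_inv_smul_of_spectrum_subset {a : A} (ha : IsSelfAdjoint a) {α : ℝ}
    (hspec : spectrum ℝ a ⊆ {0, α}) : IsStarProjection (α⁻¹ • a) := by
  rw [← cfc_smul_id (R := ℝ) α⁻¹ a, isStarProjection_iff_spectrum_subset_and_isSelfAdjoint,
    cfc_map_spectrum _ a]
  refine ⟨?_, cfc_predicate _ a⟩
  rintro _ ⟨x, hx, rfl⟩
  rcases hspec hx with rfl | rfl
  · simp
  · by_cases hx0 : x = 0 <;> simp [hx0]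

variable [PartialOrder A] [StarOrderedRing A]

lemma cfc_mul_le_self {a : A} (ha : 0 ≤ a) {h : ℝ → ℝ} (hc : Continuous h)
    (h1 : ∀ x ∈ spectrum ℝ a, h x ≤ 1) : cfc (fun x => x * h x) a ≤ a := by
  conv_rhs => rw [← cfc_id' ℝ a]
  exact cfc_mono fun x hx => mul_le_of_le_one_right (spectrum_nonneg_of_nonneg ha hx) (h1 x hx)

lemma eq_of_mem_spectrum_of_forall_le_eq_smul {a : A} (ha : 0 ≤ a)
    (hface : ∀ b, 0 ≤ b → b ≤ a → ∃ c : ℝ, b = c • a)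
    {α β : ℝ} (hα : α ∈ spectrum ℝ a) (hβ : β ∈ spectrum ℝ a) (hα0 : α ≠ 0) (hβ0 : β ≠ 0) :
    α = β := by
  by_contra hne
  obtain ⟨f, hfβ, hfα, hf01⟩ := exists_continuous_zero_one_of_isClosed
    (isClosed_singleton (x := β)) isClosed_singleton (Set.disjoint_singleton.2 (Ne.symm hne))
  obtain ⟨c, hc⟩ := hface (cfc (fun x => x * f x) a)
    (cfc_nonneg fun x hx => mul_nonneg (spectrum_nonneg_of_nonneg ha hx) (hf01 x).1)
    (cfc_mul_le_self ha f.continuous fun x _ => (hf01 x).2)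
  have heq := eqOn_of_cfc_eq_cfc (hc.trans (cfc_const_mul_id c a).symm)
  have hcα : α = c * α := by simpa [hfα rfl] using heq hα
  have hcβ : 0 = c * β := by simpa [hfβ rfl] using heq hβ
  have hc1 : c = 1 := (mul_eq_right₀ hα0).mp hcα.symm
  exact hβ0 (by simpa [hc1] using hcβ.symm)

lemma spectrum_subset_pair_of_forall_le_eq_smul {a : A} (ha : 0 ≤ a)
    (hface : ∀ b, 0 ≤ b → b ≤ a → ∃ c : ℝ, b = c • a)
    {α : ℝ} (hα : α ∈ spectrum ℝ a) (hα0 : α ≠ 0) : spectrum ℝ a ⊆ {0, α} := fun β hβ => by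
  by_cases hβ0 : β = 0
  · exact Or.inl hβ0
  · exact Or.inr (eq_of_mem_spectrum_of_forall_le_eq_smul ha hface hα hβ hα0 hβ0).symm

end CStarAlgebra

section QProbability

variable {H : Type*} [NormedAddCommGroup H] [InnerProductSpace ℂ H] [CompleteSpace H]

def IsExtremeQProbability (one : H) (ρ : H →L[ℂ] H) : Prop :=
  ∀ (ρ₁ ρ₂ : H →L[ℂ] H), ρ₁.IsPositive → ρ₂.IsPositive →
    ⟪ρ₁ one, one⟫ = 1 → ⟪ρ₂ one, one⟫ = 1 →
    ∀ l : ℝ, 0 < l → l < 1 → ρ = (l : ℂ) • ρ₁ + ((1 - l : ℝ) : ℂ) • ρ₂ → ρ₁ = ρ₂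

open ContinuousLinearMap in
lemma IsExtremeQProbability.exists_eq_smul_of_le {one : H} {ρ : H →L[ℂ] H}
    (hext : IsExtremeQProbability one ρ) (hn : ⟪ρ one, one⟫ = 1)
    {T : H →L[ℂ] H} (hT : 0 ≤ T) (hTρ : T ≤ ρ) : ∃ c : ℝ, T = c • ρ := by
  have hρ : 0 ≤ ρ := hT.trans hTρ
  set a : ℝ := RCLike.re ⟪T one, one⟫
  have hTa : ⟪T one, one⟫ = a :=
    ((isPositive_iff_complex T).mp ((nonneg_iff_isPositive T).mp hT) one).1.symm
  have ha0 : 0 ≤ a := ((nonneg_iff_isPositive T).mp hT).re_inner_nonneg_left one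
  have ha1 : a ≤ 1 := by simpa [inner_sub_left, hTa, hn] using hTρ.re_inner_nonneg_left one
  have hρ₁ : 0 ≤ T + (1 - a) • ρ := add_nonneg hT (smul_nonneg (by linarith) hρ)
  have hρ₂ : 0 ≤ (ρ - T) + a • ρ := add_nonneg (sub_nonneg.mpr hTρ) (smul_nonneg ha0 hρ)
  have heq := hext _ _ ((nonneg_iff_isPositive _).mp hρ₁) ((nonneg_iff_isPositive _).mp hρ₂)
    (by simp [hTa, hn]) (by simp [hTa, hn])
    (1 / 2) (by norm_num) (by norm_num) (by rw [Complex.coe_smul, Complex.coe_smul]; module)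
  exact ⟨a, by linear_combination (norm := module) (1 / 2 : ℝ) • heq⟩

end QProbability

theorem stmt6_general {H : Type*} [NormedAddCommGroup H] [InnerProductSpace ℂ H] [CompleteSpace H]
    (one : H)
    (ρ : H →L[ℂ] H) (hρ : ρ.IsPositive) (hn : ⟪ρ one, one⟫ = 1)
    (hext : ∀ (ρ₁ ρ₂ : H →L[ℂ] H), ρ₁.IsPositive → ρ₂.IsPositive →
      ⟪ρ₁ one, one⟫ = 1 → ⟪ρ₂ one, one⟫ = 1 →
      ∀ l : ℝ, 0 < l → l < 1 → ρ = (l : ℂ) • ρ₁ + ((1 - l : ℝ) : ℂ) • ρ₂ → ρ₁ = ρ₂) :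
    ∃ (α : ℝ) (P : H →L[ℂ] H), 0 < α ∧ IsIdempotentElem P ∧ IsSelfAdjoint P ∧
      ρ = (α : ℂ) • P := by
  have hρ0 : 0 ≤ ρ := (ContinuousLinearMap.nonneg_iff_isPositive ρ).mpr hρ
  obtain ⟨α, hα, hα0⟩ : ∃ α ∈ spectrum ℝ ρ, α ≠ 0 := by
    by_contra! h
    have : ρ = 0 := CFC.eq_zero_of_spectrum_subset_zero ρ h
    simp [this] at hn
  have hspec := spectrum_subset_pair_of_forall_le_eq_smul hρ0
    (fun _ => IsExtremeQProbability.exists_eq_smul_of_le hext hn) hα hα0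
  have hP := isStarProjection_inv_smul_of_spectrum_subset hρ.isSelfAdjoint hspec
  refine ⟨α, α⁻¹ • ρ, (spectrum_nonneg_of_nonneg hρ0 hα).lt_of_ne' hα0,
    hP.isIdempotentElem, hP.isSelfAdjoint, ?_⟩
  rw [Complex.coe_smul, smul_smul, mul_inv_cancel₀ hα0, one_smul]

/-- If ρ is a q-probability operator that is an extreme point of the set of
q-probability operators, then ρ = α P for a projection P and α > 0 (so the
spectrum of ρ consists of a single nonzero point). -/
theorem stmt6 {H : Type*} [NormedAddCommGroup H] [InnerProductSpace ℂ H] [CompleteSpace H]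
    (one : H) (hone : ‖one‖ = 1)
    (ρ : H →L[ℂ] H) (hρ : ρ.IsPositive) (hn : ⟪ρ one, one⟫ = 1)
    (hext : ∀ (ρ₁ ρ₂ : H →L[ℂ] H), ρ₁.IsPositive → ρ₂.IsPositive →
      ⟪ρ₁ one, one⟫ = 1 → ⟪ρ₂ one, one⟫ = 1 →
      ∀ l : ℝ, 0 < l → l < 1 → ρ = (l : ℂ) • ρ₁ + ((1 - l : ℝ) : ℂ) • ρ₂ → ρ₁ = ρ₂) :
    ∃ (α : ℝ) (P : H →L[ℂ] H), 0 < α ∧ IsIdempotentElem P ∧ IsSelfAdjoint P ∧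
      ρ = (α : ℂ) • P :=
  stmt6_general one ρ hρ hn hext
end

section
/- For a DQP (ρ_n) with filtration H_n = L²(Ω, 𝒜_n, ν_n), the collection 𝒮 of suitable sets—sets A ∈ 𝒜 such that lim_{j→∞} ⟨ρ_j χ_A, χ_A⟩ exists and is finite—is a quadratic algebra, and μ(A) = lim_j ⟨ρ_j χ_A, χ_A⟩ defines a grade-2 additive map (q-measure) on 𝒮. -/
open MeasureTheory Filter

local notation "⟪" x ", " y "⟫" => @inner ℂ _ _ x y

/-- The indicator function χ_A of a measurable set as an element of L²(Ω,𝒜,ν). -/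
noncomputable def chi {Ω : Type*} [MeasurableSpace Ω] (ν : Measure Ω) [IsProbabilityMeasure ν]
    (A : Set Ω) (hA : MeasurableSet A) : Lp ℂ 2 ν :=
  indicatorConstLp 2 hA (measure_ne_top ν A) 1

/-- A quadratic algebra of subsets. -/
def IsQuadraticAlgebra {Ω : Type*} (ℬ : Set (Set Ω)) : Prop :=
  ∅ ∈ ℬ ∧ Set.univ ∈ ℬ ∧
    ∀ A B C : Set Ω, A ∈ ℬ → B ∈ ℬ → C ∈ ℬ →
      Disjoint A B → Disjoint A C → Disjoint B C →
      A ∪ B ∈ ℬ → A ∪ C ∈ ℬ → B ∪ C ∈ ℬ → A ∪ B ∪ C ∈ ℬ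

lemma chi_union {Ω : Type*} [MeasurableSpace Ω] (ν : Measure Ω) [IsProbabilityMeasure ν]
    {A B : Set Ω} (hA : MeasurableSet A) (hB : MeasurableSet B) (hAB : Disjoint A B) :
    chi ν (A ∪ B) (hA.union hB) = chi ν A hA + chi ν B hB := by
  simp only [chi]
  exact indicatorConstLp_disjoint_union hA hB (measure_ne_top ν A) (measure_ne_top ν B) hAB 1

lemma quad_re {E : Type*} [NormedAddCommGroup E] [InnerProductSpace ℂ E]
    (T : E →L[ℂ] E) (x y z : E) :
    (⟪x + y + z, T (x + y + z)⟫).re =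
      (⟪x + y, T (x + y)⟫).re + (⟪x + z, T (x + z)⟫).re + (⟪y + z, T (y + z)⟫).re
        - (⟪x, T x⟫).re - (⟪y, T y⟫).re - (⟪z, T z⟫).re := by
  simp only [map_add, inner_add_left, inner_add_right, Complex.add_re]
  ring

/-- For a discrete quantum process (ρ_n) on the filtration H_n = L²(Ω,𝒜_n,ν_n),
the suitable sets (those A with lim_j ⟨ρ_j χ_A, χ_A⟩ existing) form a quadratic
algebra, and μ(A) = lim_j ⟨ρ_j χ_A, χ_A⟩ is grade-2 additive on them. -/
theorem stmt13 {Ω : Type*} [mΩ : MeasurableSpace Ω] (ν : Measure Ω) [IsProbabilityMeasure ν]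
    (m : ℕ → MeasurableSpace Ω) (hmono : Monotone m) (hle : ∀ n, m n ≤ mΩ)
    (hgen : (⨆ n, m n) = mΩ)
    (ρ : ℕ → (Lp ℂ 2 ν →L[ℂ] Lp ℂ 2 ν))
    (hpos : ∀ n, (ρ n).IsPositive)
    (hnorm : ∀ n, ⟪chi ν Set.univ MeasurableSet.univ,
      (ρ n) (chi ν Set.univ MeasurableSet.univ)⟫ = 1)
    (hcons : ∀ (n : ℕ) (A B : Set Ω) (hA : @MeasurableSet Ω (m n) A)
      (hB : @MeasurableSet Ω (m n) B),
      ⟪chi ν A (hle n A hA), (ρ (n + 1)) (chi ν B (hle n B hB))⟫ =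
        ⟪chi ν A (hle n A hA), (ρ n) (chi ν B (hle n B hB))⟫) :
    IsQuadraticAlgebra {A : Set Ω | ∃ (hA : MeasurableSet A) (l : ℝ),
        Tendsto (fun j => (⟪chi ν A hA, (ρ j) (chi ν A hA)⟫).re) atTop (nhds l)} ∧
    ∀ (A B C : Set Ω) (hA : MeasurableSet A) (hB : MeasurableSet B) (hC : MeasurableSet C),
      Disjoint A B → Disjoint A C → Disjoint B C →
      ∀ a b c ab ac bc abc : ℝ,
      Tendsto (fun j => (⟪chi ν A hA, (ρ j) (chi ν A hA)⟫).re) atTop (nhds a) →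
      Tendsto (fun j => (⟪chi ν B hB, (ρ j) (chi ν B hB)⟫).re) atTop (nhds b) →
      Tendsto (fun j => (⟪chi ν C hC, (ρ j) (chi ν C hC)⟫).re) atTop (nhds c) →
      Tendsto (fun j => (⟪chi ν (A ∪ B) (hA.union hB),
        (ρ j) (chi ν (A ∪ B) (hA.union hB))⟫).re) atTop (nhds ab) →
      Tendsto (fun j => (⟪chi ν (A ∪ C) (hA.union hC),
        (ρ j) (chi ν (A ∪ C) (hA.union hC))⟫).re) atTop (nhds ac) →
      Tendsto (fun j => (⟪chi ν (B ∪ C) (hB.union hC),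
        (ρ j) (chi ν (B ∪ C) (hB.union hC))⟫).re) atTop (nhds bc) →
      Tendsto (fun j => (⟪chi ν (A ∪ B ∪ C) ((hA.union hB).union hC),
        (ρ j) (chi ν (A ∪ B ∪ C) ((hA.union hB).union hC))⟫).re) atTop (nhds abc) →
      abc = ab + ac + bc - a - b - c := by
  have key : ∀ (A B C : Set Ω) (hA : MeasurableSet A) (hB : MeasurableSet B)
      (hC : MeasurableSet C), Disjoint A B → Disjoint A C → Disjoint B C → ∀ j,
      (⟪chi ν (A ∪ B ∪ C) ((hA.union hB).union hC),
        (ρ j) (chi ν (A ∪ B ∪ C) ((hA.union hB).union hC))⟫).re =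
      (⟪chi ν (A ∪ B) (hA.union hB), (ρ j) (chi ν (A ∪ B) (hA.union hB))⟫).re
      + (⟪chi ν (A ∪ C) (hA.union hC), (ρ j) (chi ν (A ∪ C) (hA.union hC))⟫).re
      + (⟪chi ν (B ∪ C) (hB.union hC), (ρ j) (chi ν (B ∪ C) (hB.union hC))⟫).re
      - (⟪chi ν A hA, (ρ j) (chi ν A hA)⟫).re
      - (⟪chi ν B hB, (ρ j) (chi ν B hB)⟫).re
      - (⟪chi ν C hC, (ρ j) (chi ν C hC)⟫).re := by
    intro A B C hA hB hC hAB hAC hBC j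
    rw [chi_union ν (hA.union hB) hC (hAC.union_left hBC),
      chi_union ν hA hB hAB, chi_union ν hA hC hAC, chi_union ν hB hC hBC]
    exact quad_re (ρ j) _ _ _
  constructor
  · refine ⟨⟨MeasurableSet.empty, 0, ?_⟩, ⟨MeasurableSet.univ, 1, ?_⟩, ?_⟩
    · have h0 : chi ν (∅ : Set Ω) MeasurableSet.empty = 0 := by
        simp [chi, indicatorConstLp_empty]
      simp only [h0, map_zero, inner_zero_right, Complex.zero_re]
      exact tendsto_const_nhds
    · have : (fun j => (⟪chi ν Set.univ MeasurableSet.univ,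
          (ρ j) (chi ν Set.univ MeasurableSet.univ)⟫).re) = fun _ => (1 : ℝ) := by
        funext j; rw [hnorm j]; simp
      rw [this]; exact tendsto_const_nhds
    · rintro A B C ⟨hA, a, ha⟩ ⟨hB, b, hb⟩ ⟨hC, c, hc⟩ hAB hAC hBC
        ⟨hAB', ab, hab⟩ ⟨hAC', ac, hac⟩ ⟨hBC', bc, hbc⟩
      refine ⟨(hA.union hB).union hC, ab + ac + bc - a - b - c, ?_⟩
      have hab2 : Tendsto (fun j => (⟪chi ν (A ∪ B) (hA.union hB),
          (ρ j) (chi ν (A ∪ B) (hA.union hB))⟫).re) atTop (nhds ab) := hab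
      have hac2 : Tendsto (fun j => (⟪chi ν (A ∪ C) (hA.union hC),
          (ρ j) (chi ν (A ∪ C) (hA.union hC))⟫).re) atTop (nhds ac) := hac
      have hbc2 : Tendsto (fun j => (⟪chi ν (B ∪ C) (hB.union hC),
          (ρ j) (chi ν (B ∪ C) (hB.union hC))⟫).re) atTop (nhds bc) := hbc
      have := ((((hab2.add hac2).add hbc2).sub ha).sub hb).sub hc
      refine this.congr fun j => (key A B C hA hB hC hAB hAC hBC j).symm
  · intro A B C hA hB hC hAB hAC hBC a b c ab ac bc abc ha hb hc hab hac hbc habc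
    have := ((((hab.add hac).add hbc).sub ha).sub hb).sub hc
    have h2 := this.congr fun j => (key A B C hA hB hC hAB hAC hBC j).symm
    exact tendsto_nhds_unique habc h2
end

section
/- The constant sequence ρ_n = |1⟩⟨1| is a quantum sequential growth process (i.e., each ρ_n is a q-probability operator on H_n and the sequence is consistent), and its local q-measures are μ_n(A) = |⟨1, χ_A⟩|² = p_c^n(A)², the square of the classical path probability measure. -/
/-!
The operator |1⟩⟨1| factors every matrix coefficient: ⟨f, ρ g⟩ = conj ⟨1, f⟩ · ⟨1, g⟩, and
⟨1, χ_A⟩ = pₙ(A). Positivity, self-adjointness and the formula for μₙ are immediate from this.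
Normalisation and consistency reduce to pₙ₊₁(ω→) = pₙ(ω), which holds because the transition
probabilities out of each path sum to one; summing over ω also shows that each pₙ has total mass one.
-/

/-- The inner product of L²(Ωₙ, 2^{Ωₙ}, p) for a finite sample space with weights p:
⟨f, g⟩ = Σ_ω p(ω) conj(f ω) g ω (conjugate-linear in the first argument). -/
noncomputable def winner {P : Type*} [Fintype P] (p : P → ℝ) (f g : P → ℂ) : ℂ :=
  ∑ ω, (p ω : ℂ) * (starRingEnd ℂ) (f ω) * g ω

/-- The indicator function of a finite set of paths. -/
def ind {P : Type*} [DecidableEq P] (A : Finset P) : P → ℂ := fun ω => if ω ∈ A then 1 else 0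

/-- The rank-one operator |1⟩⟨1| on L²(Ωₙ, 2^{Ωₙ}, p): f ↦ ⟨1, f⟩·1. -/
noncomputable def rhoOne {P : Type*} [Fintype P] (p : P → ℝ) (f : P → ℂ) : P → ℂ :=
  fun _ => winner p (fun _ => 1) f

open Finset

/-- `wsum p f` is the coefficient ⟨1, f⟩, so that `rhoOne p f` is the constant `wsum p f`. -/
noncomputable def wsum {P : Type*} [Fintype P] (p : P → ℝ) (f : P → ℂ) : ℂ :=
  ∑ ω, (p ω : ℂ) * f ω

section RankOne

variable {P : Type*} [Fintype P] (p : P → ℝ)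

lemma winner_rhoOne (f g : P → ℂ) :
    winner p f (rhoOne p g) = starRingEnd ℂ (wsum p f) * wsum p g := by
  simp only [winner, rhoOne, wsum, map_one, mul_one, map_sum, map_mul,
    Complex.conj_ofReal, ← Finset.sum_mul]

lemma winner_rhoOne_self (f : P → ℂ) :
    winner p f (rhoOne p f) = (Complex.normSq (wsum p f) : ℂ) := by
  rw [winner_rhoOne, Complex.normSq_eq_conj_mul_self]

lemma winner_rhoOne_comm (f g : P → ℂ) :
    winner p f (rhoOne p g) = starRingEnd ℂ (winner p g (rhoOne p f)) := by
  rw [winner_rhoOne, winner_rhoOne, map_mul, Complex.conj_conj, mul_comm]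

lemma wsum_ind [DecidableEq P] (A : Finset P) :
    wsum p (ind A) = ((∑ ω ∈ A, p ω : ℝ) : ℂ) := by
  simp [wsum, ind, mul_ite, Finset.sum_ite_mem, Finset.univ_inter]

lemma wsum_const_one (hp : ∑ ω, p ω = 1) : wsum p (fun _ => 1) = 1 := by
  simp only [wsum, mul_one]
  exact_mod_cast hp

end RankOne

section Fibers

variable {P Q : Type*} [Fintype Q] [DecidableEq P] (ext : Q → P)
  (p : P → ℝ) (p' : Q → ℝ) (t : Q → ℝ)

lemma sum_fiber_eq_of_transition (hrel : ∀ σ, p' σ = p (ext σ) * t σ)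
    (hsum : ∀ ω, ∑ σ ∈ univ.filter (fun σ => ext σ = ω), t σ = 1) (ω : P) :
    ∑ σ ∈ univ.filter (fun σ => ext σ = ω), p' σ = p ω := by
  calc ∑ σ ∈ univ.filter (fun σ => ext σ = ω), p' σ
      = ∑ σ ∈ univ.filter (fun σ => ext σ = ω), p ω * t σ :=
        sum_congr rfl fun σ hσ => by rw [hrel, (mem_filter.mp hσ).2]
    _ = p ω := by rw [← mul_sum, hsum, mul_one]

lemma sum_eq_of_sum_fiber_eq [Fintype P] (hfiber : ∀ ω, ∑ σ ∈ univ.filter (fun σ => ext σ = ω), p' σ = p ω) :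
    ∑ σ, p' σ = ∑ ω, p ω := by
  rw [← sum_fiberwise univ ext p']
  exact sum_congr rfl fun ω _ => hfiber ω

end Fibers

theorem stmt19_general (P : ℕ → Type*) [∀ n, Fintype (P n)] [∀ n, DecidableEq (P n)]
    (ext : ∀ n, P (n + 1) → P n) (p : ∀ n, P n → ℝ) (ptrans : ∀ n, P (n + 1) → ℝ)
    (hrel : ∀ n σ, p (n + 1) σ = p n (ext n σ) * ptrans n σ)
    (hsum : ∀ n (ω : P n), ∑ σ ∈ Finset.univ.filter (fun σ => ext n σ = ω), ptrans n σ = 1)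
    (hprob : ∑ ω : P 0, p 0 ω = 1) :
    (∀ n (f : P n → ℂ),
      0 ≤ (winner (p n) f (rhoOne (p n) f)).re ∧ (winner (p n) f (rhoOne (p n) f)).im = 0) ∧
    (∀ n (f g : P n → ℂ),
      winner (p n) f (rhoOne (p n) g) = (starRingEnd ℂ) (winner (p n) g (rhoOne (p n) f))) ∧
    (∀ n, winner (p n) (fun _ => 1) (rhoOne (p n) fun _ => 1) = 1) ∧
    (∀ n (ω ω' : P n),
      winner (p n) (ind {ω}) (rhoOne (p n) (ind {ω'})) =
        winner (p (n + 1)) (ind (Finset.univ.filter fun σ => ext n σ = ω))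
          (rhoOne (p (n + 1)) (ind (Finset.univ.filter fun σ => ext n σ = ω')))) ∧
    (∀ n (A : Finset (P n)),
      winner (p n) (ind A) (rhoOne (p n) (ind A)) = (((∑ ω ∈ A, p n ω) ^ 2 : ℝ) : ℂ)) := by
  have hfiber n := sum_fiber_eq_of_transition (ext n) (p n) (p (n + 1)) (ptrans n) (hrel n) (hsum n)
  have hmass : ∀ n, ∑ ω, p n ω = 1 := by
    intro n
    induction n with
    | zero => exact hprob
    | succ n ih => rw [sum_eq_of_sum_fiber_eq (ext n) (p n) (p (n + 1)) (hfiber n), ih]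
  refine ⟨fun n f => ?_, fun n => winner_rhoOne_comm (p n), fun n => ?_, fun n ω ω' => ?_,
    fun n A => ?_⟩
  · rw [winner_rhoOne_self, Complex.ofReal_re, Complex.ofReal_im]
    exact ⟨Complex.normSq_nonneg _, rfl⟩
  · rw [winner_rhoOne, wsum_const_one _ (hmass n), map_one, one_mul]
  · simp only [winner_rhoOne, wsum_ind, hfiber, sum_singleton]
  · rw [winner_rhoOne, wsum_ind, Complex.conj_ofReal, ← Complex.ofReal_mul, sq]

/-- The constant sequence ρ_n = |1⟩⟨1| is a quantum sequential growth process: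
each ρ_n is a q-probability operator (positive self-adjoint with ⟨ρ_n 1, 1⟩ = 1)
and the sequence is consistent (⟨ρ_n χ_{{ω'}}, χ_{{ω}}⟩ = ⟨ρ_{n+1} χ_{ω'→}, χ_{ω→}⟩);
its local q-measures are μ_n(A) = |⟨1, χ_A⟩|² = p_c^n(A)², the square of the
classical path probability. -/
theorem stmt19 (P : ℕ → Type*) [∀ n, Fintype (P n)] [∀ n, DecidableEq (P n)]
    (ext : ∀ n, P (n + 1) → P n) (p : ∀ n, P n → ℝ) (ptrans : ∀ n, P (n + 1) → ℝ)
    (hp : ∀ n ω, 0 < p n ω)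
    (hrel : ∀ n σ, p (n + 1) σ = p n (ext n σ) * ptrans n σ)
    (hsum : ∀ n (ω : P n), ∑ σ ∈ Finset.univ.filter (fun σ => ext n σ = ω), ptrans n σ = 1)
    (hprob : ∑ ω : P 0, p 0 ω = 1) :
    (∀ n (f : P n → ℂ),
      0 ≤ (winner (p n) f (rhoOne (p n) f)).re ∧ (winner (p n) f (rhoOne (p n) f)).im = 0) ∧
    (∀ n (f g : P n → ℂ),
      winner (p n) f (rhoOne (p n) g) = (starRingEnd ℂ) (winner (p n) g (rhoOne (p n) f))) ∧
    (∀ n, winner (p n) (fun _ => 1) (rhoOne (p n) fun _ => 1) = 1) ∧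
    (∀ n (ω ω' : P n),
      winner (p n) (ind {ω}) (rhoOne (p n) (ind {ω'})) =
        winner (p (n + 1)) (ind (Finset.univ.filter fun σ => ext n σ = ω))
          (rhoOne (p (n + 1)) (ind (Finset.univ.filter fun σ => ext n σ = ω')))) ∧
    (∀ n (A : Finset (P n)),
      winner (p n) (ind A) (rhoOne (p n) (ind A)) = (((∑ ω ∈ A, p n ω) ^ 2 : ℝ) : ℂ)) :=
  stmt19_general P ext p ptrans hrel hsum hprob
end
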